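/- arXiv:1111.1020 — 2 statements merged into one kernel-verified Lean document; each statement's English description precedes it below -/
import Mathlib

section
/- For any tree-structured pairwise Markov random field (i.e., the graph G contains no cycles), the sequence of message vectors {m^t} generated by the stochastic belief propagation (SBP) algorithm with step size α_t = 1/(t+1) converges almost surely, as t → ∞, to the unique fixed point m* of the BP update function F. -/
open Finset MeasureTheory Filter

noncomputable def l2norm {ι : Type*} [Fintype ι] (x : ι → ℝ) : ℝ :=
  Real.sqrt (∑ i, x i ^ 2)

structure GM (V : Type*) [Fintype V] [DecidableEq V] where
  G : SimpleGraph V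
  adjDec : DecidableRel G.Adj
  d : ℕ
  ψn : V → Fin d → ℝ
  ψe : V → V → Fin d → Fin d → ℝ

attribute [instance] GM.adjDec

namespace GM

variable {V : Type*} [Fintype V] [DecidableEq V] (P : GM V)

abbrev DirEdge : Type _ := {e : V × V // P.G.Adj e.1 e.2}

abbrev Msg : Type _ := P.DirEdge × Fin P.d → ℝ

noncomputable def bmass (e : P.DirEdge) (j : Fin P.d) : ℝ :=
  P.ψn e.1.1 j * ∑ i, P.ψe e.1.1 e.1.2 i j

noncomputable def Gam (e : P.DirEdge) (i j : Fin P.d) : ℝ :=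
  P.ψe e.1.1 e.1.2 i j * P.ψn e.1.1 j / P.bmass e j

def revEdge (e : P.DirEdge) (w : {x // x ∈ (P.G.neighborFinset e.1.1).erase e.1.2}) :
    P.DirEdge :=
  ⟨(w.1, e.1.1), by
    have h := Finset.mem_of_mem_erase w.2
    rw [SimpleGraph.mem_neighborFinset] at h
    exact h.symm⟩

noncomputable def Mprod (m : P.Msg) (e : P.DirEdge) (j : Fin P.d) : ℝ :=
  ∏ w ∈ ((P.G.neighborFinset e.1.1).erase e.1.2).attach, m (P.revEdge e w, j)

noncomputable def bp (m : P.Msg) : P.Msg := fun p =>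
  (∑ j, P.ψe p.1.1.1 p.1.1.2 p.2 j * P.ψn p.1.1.1 j * P.Mprod m p.1 j) /
  (∑ i, ∑ j, P.ψe p.1.1.1 p.1.1.2 i j * P.ψn p.1.1.1 j * P.Mprod m p.1 j)

noncomputable def beta0 (e : P.DirEdge) (i : Fin P.d) : ℝ := ⨅ j, P.Gam e i j

noncomputable def mu0 (e : P.DirEdge) (i : Fin P.d) : ℝ := ⨆ j, P.Gam e i j

def ball : Set P.Msg :=
  {m | ∀ e : P.DirEdge, (∑ i, m (e, i)) = 1 ∧
    ∀ i, P.beta0 e i ≤ m (e, i) ∧ m (e, i) ≤ P.mu0 e i}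

noncomputable def Cpsi : ℝ :=
  4 * (∑ e : P.DirEdge, ⨆ i, P.mu0 e i) / (∑ e : P.DirEdge, ⨅ i, P.beta0 e i)

noncomputable def sbpProb (m : P.Msg) (e : P.DirEdge) (j : Fin P.d) : ℝ :=
  P.bmass e j * P.Mprod m e j / ∑ k, P.bmass e k * P.Mprod m e k

noncomputable def graphDiam : ℕ :=
  Finset.univ.sup fun pr : V × V => P.G.dist pr.1 pr.2

def IsSBP {Ω : Type*} {mΩ : MeasurableSpace Ω} (μ : Measure Ω)
    (ℱ : Filtration ℕ mΩ) (α : ℕ → ℝ) (m0 : P.Msg)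
    (M : ℕ → Ω → P.Msg) (J : ℕ → Ω → P.DirEdge → Fin P.d) : Prop :=
  (∀ ω, M 0 ω = m0) ∧
  (∀ t, Measurable[ℱ t] (M t)) ∧
  (∀ t, Measurable[ℱ (t+1)] (J (t+1))) ∧
  (∀ t ω (e : P.DirEdge) (i : Fin P.d),
      M (t+1) ω (e, i) = (1 - α t) * M t ω (e, i) + α t * P.Gam e i (J (t+1) ω e)) ∧
  (∀ t (jj : P.DirEdge → Fin P.d),
      (μ[(fun ω => if ∀ e, J (t+1) ω e = jj e then (1:ℝ) else 0) | ℱ t])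
        =ᵐ[μ] fun ω => ∏ e : P.DirEdge, P.sbpProb (M t ω) e (jj e))


end GM


open Finset MeasureTheory Filter

/-- deterministic gap-fill: if partial sums with bounded increments have
`a (k^2)/k^2 → 0` then `a n / n → 0`. -/
lemma gapfill (a : ℕ → ℝ) (C : ℝ) (hC : 0 ≤ C)
    (hinc : ∀ n, |a (n+1) - a n| ≤ C)
    (hsub : Tendsto (fun k : ℕ => ((k:ℝ)^2)⁻¹ * a (k^2)) atTop (nhds 0)) :
    Tendsto (fun n : ℕ => (n:ℝ)⁻¹ * a n) atTop (nhds 0) := by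
  have hdiff : ∀ l m, l ≤ m → |a m - a l| ≤ C * (m - l) := by
    intro l m h
    induction m with
    | zero => simp [Nat.le_zero.mp h]
    | succ m ih =>
      rcases Nat.lt_or_ge l (m+1) with h' | h'
      · have hlm : l ≤ m := Nat.lt_succ_iff.mp h'
        have := ih hlm
        have h2 := hinc m
        have : |a (m+1) - a l| ≤ C * (m - l) + C := by
          calc |a (m+1) - a l| = |(a m - a l) + (a (m+1) - a m)| := by ring_nf
            _ ≤ |a m - a l| + |a (m+1) - a m| := abs_add_le _ _
            _ ≤ C * (m - l) + C := add_le_add this h2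
        calc |a (m+1) - a l| ≤ C * (m - l) + C := this
          _ = C * ((m - l : ℝ) + 1) := by ring
          _ ≤ C * ((m+1 : ℕ) - l) := by
              apply mul_le_mul_of_nonneg_left _ hC
              push_cast
              have : (l:ℝ) ≤ m := by exact_mod_cast hlm
              linarith
      · have : l = m + 1 := le_antisymm h h'
        simp [this]
  have hsqrt : Tendsto (fun n => Nat.sqrt n) atTop atTop := by
    apply tendsto_atTop_atTop.mpr
    intro b
    exact ⟨b^2, fun n hn => (Nat.le_sqrt').mpr (by simpa [pow_two] using hn)⟩
  -- bound: for n ≥ 1, |n⁻¹ * a n| ≤ |T (sqrt n)| + C*(2*sqrt n + 1)/(sqrt n)^2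
  have key : ∀ n : ℕ, 1 ≤ n →
      |(n:ℝ)⁻¹ * a n| ≤ |((Nat.sqrt n : ℝ)^2)⁻¹ * a ((Nat.sqrt n)^2)|
        + C * (2 * (Nat.sqrt n : ℝ) + 1) / ((Nat.sqrt n : ℝ)^2) := by
    intro n hn
    set k := Nat.sqrt n with hk
    have hk1 : 1 ≤ k := by
      have := Nat.sqrt_le_sqrt hn
      simpa [hk] using this
    have hk2n : k^2 ≤ n := Nat.sqrt_le' n
    have hnk : n < (k+1)^2 := Nat.lt_succ_sqrt' n
    have hkR : (0:ℝ) < (k:ℝ)^2 := by positivity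
    have hnR : (0:ℝ) < (n:ℝ) := by exact_mod_cast hn
    have h1 : |a n| ≤ |a (k^2)| + C * (n - k^2 : ℕ) := by
      have := hdiff (k^2) n hk2n
      have habs : |a n| - |a (k^2)| ≤ |a n - a (k^2)| := by
        have := abs_sub_abs_le_abs_sub (a n) (a (k^2))
        linarith
      have hcast : ((n:ℝ) - (k^2:ℕ)) = ((n - k^2 : ℕ) : ℝ) := by
        push_cast [Nat.cast_sub hk2n]; ring
      rw [hcast] at this
      linarith
    have h2 : ((n - k^2 : ℕ):ℝ) ≤ 2*(k:ℝ) + 1 := by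
      have hexp : (k+1)^2 = k^2 + 2*k + 1 := by ring
      have : n - k^2 ≤ 2*k + 1 := by omega
      exact_mod_cast this
    have hk2nR : ((k:ℝ)^2) ≤ (n:ℝ) := by exact_mod_cast hk2n
    rw [abs_mul, abs_inv, abs_of_nonneg (le_of_lt hnR)]
    rw [abs_mul, abs_inv, abs_of_nonneg (le_of_lt hkR)]
    have e1 : (n:ℝ)⁻¹ * |a n| ≤ (n:ℝ)⁻¹ * (|a (k^2)| + C * (n - k^2 : ℕ)) :=
      mul_le_mul_of_nonneg_left h1 (by positivity)
    have e2 : (n:ℝ)⁻¹ * (|a (k^2)| + C * (n - k^2 : ℕ))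
        ≤ ((k:ℝ)^2)⁻¹ * |a (k^2)| + C * (2*(k:ℝ)+1) / ((k:ℝ)^2) := by
      rw [mul_add]
      apply add_le_add
      · apply mul_le_mul_of_nonneg_right _ (abs_nonneg _)
        exact inv_anti₀ hkR hk2nR
      · have s1 : (n:ℝ)⁻¹ * ((n - k^2 : ℕ):ℝ) ≤ (n:ℝ)⁻¹ * (2*(k:ℝ)+1) :=
          mul_le_mul_of_nonneg_left h2 (by positivity)
        have s2 : (n:ℝ)⁻¹ * (2*(k:ℝ)+1) ≤ ((k:ℝ)^2)⁻¹ * (2*(k:ℝ)+1) := by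
          apply mul_le_mul_of_nonneg_right _ (by positivity)
          exact inv_anti₀ hkR hk2nR
        have s3 : (n:ℝ)⁻¹ * (C * ((n - k^2 : ℕ):ℝ)) = C * ((n:ℝ)⁻¹ * ((n - k^2 : ℕ):ℝ)) := by ring
        rw [s3, div_eq_mul_inv]
        have := le_trans s1 s2
        nlinarith [mul_le_mul_of_nonneg_left this hC]
    linarith
  have hT : Tendsto (fun n => |((Nat.sqrt n : ℝ)^2)⁻¹ * a ((Nat.sqrt n)^2)|
        + C * (2 * (Nat.sqrt n : ℝ) + 1) / ((Nat.sqrt n : ℝ)^2)) atTop (nhds 0) := by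
    have t1 : Tendsto (fun k : ℕ => |((k:ℝ)^2)⁻¹ * a (k^2)|) atTop (nhds 0) := by
      simpa using hsub.abs
    have t2 : Tendsto (fun k : ℕ => C * (2*(k:ℝ)+1)/((k:ℝ)^2)) atTop (nhds 0) := by
      have : (fun k : ℕ => C * (2*(k:ℝ)+1)/((k:ℝ)^2)) =ᶠ[atTop]
          (fun k : ℕ => C * (2 * (k:ℝ)⁻¹ + (k:ℝ)⁻¹ * (k:ℝ)⁻¹)) := by
        filter_upwards [eventually_ge_atTop 1] with k hk
        have : (k:ℝ) ≠ 0 := by positivity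
        field_simp
      rw [tendsto_congr' this]
      have hik : Tendsto (fun k : ℕ => ((k:ℝ))⁻¹) atTop (nhds 0) := tendsto_inv_atTop_nhds_zero_nat
      have : Tendsto (fun k : ℕ => C * (2 * (k:ℝ)⁻¹ + (k:ℝ)⁻¹ * (k:ℝ)⁻¹)) atTop
          (nhds (C * (2 * 0 + 0 * 0))) := by
        exact (tendsto_const_nhds.mul (((tendsto_const_nhds.mul hik)).add (hik.mul hik)))
      simpa using this
    have := (t1.comp hsqrt).add (t2.comp hsqrt)
    simpa [Function.comp] using this
  apply squeeze_zero_norm' _ hT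
  filter_upwards [eventually_ge_atTop 1] with n hn
  exact key n hn


lemma avg_tendsto_of_condexp
    {Ω : Type*} {mΩ : MeasurableSpace Ω} {μ : Measure Ω} [IsProbabilityMeasure μ]
    (𝒢 : Filtration ℕ mΩ) (X Y : ℕ → Ω → ℝ) (B : ℝ) (hB : 0 ≤ B)
    (hXmeas : ∀ n, Measurable[𝒢 (n+1)] (X n))
    (hXbd : ∀ n ω, |X n ω| ≤ B)
    (hYmeas : ∀ n, Measurable[𝒢 n] (Y n))
    (hYbd : ∀ n ω, |Y n ω| ≤ B)
    (hCE : ∀ n, μ[X n | 𝒢 n] =ᵐ[μ] Y n) :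
    ∀ᵐ ω ∂μ, ∀ (L : ℝ), Tendsto (fun n => Y n ω) atTop (nhds L) →
      Tendsto (fun n : ℕ => (n:ℝ)⁻¹ * ∑ k ∈ Finset.range n, X k ω) atTop (nhds L) := by
  classical
  set D : ℕ → Ω → ℝ := fun n ω => X n ω - Y n ω with hD
  have hXm : ∀ n, Measurable (X n) := fun n => (hXmeas n).mono (𝒢.le _) le_rfl
  have hYm : ∀ n, Measurable (Y n) := fun n => (hYmeas n).mono (𝒢.le _) le_rfl
  have hDm : ∀ n, Measurable (D n) := fun n => (hXm n).sub (hYm n)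
  have hDbd : ∀ n ω, |D n ω| ≤ 2*B := by
    intro n ω
    calc |D n ω| ≤ |X n ω| + |Y n ω| := abs_sub _ _
      _ ≤ 2*B := by have := hXbd n ω; have := hYbd n ω; linarith
  have hXint : ∀ n, Integrable (X n) μ :=
    fun n => Integrable.mono' (integrable_const B) (hXm n).aestronglyMeasurable
      (ae_of_all _ (fun ω => by simpa using hXbd n ω))
  have hYint : ∀ n, Integrable (Y n) μ :=
    fun n => Integrable.mono' (integrable_const B) (hYm n).aestronglyMeasurable
      (ae_of_all _ (fun ω => by simpa using hYbd n ω))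
  have hDint : ∀ n, Integrable (D n) μ := fun n => (hXint n).sub (hYint n)
  have hDce : ∀ n, μ[D n | 𝒢 n] =ᵐ[μ] 0 := by
    intro n
    have h1 : μ[D n | 𝒢 n] =ᵐ[μ] μ[X n | 𝒢 n] - μ[Y n | 𝒢 n] :=
      condExp_sub (hXint n) (hYint n) _
    have h2 : μ[Y n | 𝒢 n] = Y n :=
      condExp_of_stronglyMeasurable (𝒢.le n) ((hYmeas n).stronglyMeasurable) (hYint n)
    filter_upwards [h1, hCE n] with ω e1 e3
    simp only [e1, Pi.sub_apply, h2, Pi.zero_apply]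
    rw [e3]; ring
  have horth : ∀ m n, m < n → ∫ ω, D m ω * D n ω ∂μ = 0 := by
    intro m n hmn
    have hmmeas : StronglyMeasurable[𝒢 n] (D m) := by
      have : Measurable[𝒢 n] (D m) :=
        (((hXmeas m).mono (𝒢.mono hmn) le_rfl).sub ((hYmeas m).mono (𝒢.mono (le_of_lt hmn)) le_rfl))
      exact this.stronglyMeasurable
    have hprodint : Integrable (D m * D n) μ := by
      apply Integrable.mono' (integrable_const ((2*B)*(2*B)))
        ((hDm m).mul (hDm n)).aestronglyMeasurable
      apply ae_of_all; intro ω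
      simp only [Pi.mul_apply, Real.norm_eq_abs, abs_mul]
      exact mul_le_mul (hDbd m ω) (hDbd n ω) (abs_nonneg _) (by positivity)
    have key : μ[D m * D n | 𝒢 n] =ᵐ[μ] D m * μ[D n | 𝒢 n] :=
      condExp_mul_of_stronglyMeasurable_left hmmeas hprodint (hDint n)
    have key0 : μ[D m * D n | 𝒢 n] =ᵐ[μ] 0 := by
      refine key.trans ?_
      filter_upwards [hDce n] with ω h
      simp [h]
    have e1 : ∫ ω, D m ω * D n ω ∂μ = ∫ ω, (μ[D m * D n | 𝒢 n]) ω ∂μ :=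
      (integral_condExp (𝒢.le n)).symm
    rw [e1, integral_congr_ae key0]
    simp
  set S : ℕ → Ω → ℝ := fun n ω => ∑ k ∈ Finset.range n, D k ω with hS
  have hSm : ∀ n, Measurable (S n) := fun n => Finset.measurable_sum _ (fun k _ => hDm k)
  have hSbd : ∀ n ω, |S n ω| ≤ n * (2*B) := by
    intro n ω
    calc |S n ω| ≤ ∑ k ∈ Finset.range n, |D k ω| := Finset.abs_sum_le_sum_abs _ _
      _ ≤ ∑ k ∈ Finset.range n, (2*B) := Finset.sum_le_sum (fun k _ => hDbd k ω)
      _ = n * (2*B) := by simp [mul_comm]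
  have hS2int : ∀ n, Integrable (fun ω => (S n ω)^2) μ := by
    intro n
    apply Integrable.mono' (integrable_const ((n * (2*B))^2)) ((hSm n).pow_const 2).aestronglyMeasurable
    apply ae_of_all; intro ω
    have h1 : ‖(S n ω)^2‖ = |S n ω|^2 := by rw [Real.norm_eq_abs, abs_pow]
    rw [h1]
    have := hSbd n ω; have h0 : (0:ℝ) ≤ |S n ω| := abs_nonneg _
    nlinarith
  have hSDint : ∀ n, Integrable (fun ω => S n ω * D n ω) μ := by
    intro n
    apply Integrable.mono' (integrable_const ((n * (2*B)) * (2*B))) ((hSm n).mul (hDm n)).aestronglyMeasurable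
    apply ae_of_all; intro ω
    rw [Real.norm_eq_abs, Pi.mul_apply, abs_mul]
    exact mul_le_mul (hSbd n ω) (hDbd n ω) (abs_nonneg _) (by positivity)
  have hSD0 : ∀ n, ∫ ω, S n ω * D n ω ∂μ = 0 := by
    intro n
    have e : (fun ω => S n ω * D n ω) = fun ω => ∑ k ∈ Finset.range n, D k ω * D n ω := by
      funext ω
      exact Finset.sum_mul _ _ _
    rw [e, integral_finset_sum]
    · exact Finset.sum_eq_zero (fun k hk => horth k n (Finset.mem_range.mp hk))
    · intro k _
      apply Integrable.mono' (integrable_const ((2*B)*(2*B))) ((hDm k).mul (hDm n)).aestronglyMeasurable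
      apply ae_of_all; intro ω
      rw [Real.norm_eq_abs, Pi.mul_apply, abs_mul]
      exact mul_le_mul (hDbd k ω) (hDbd n ω) (abs_nonneg _) (by positivity)
  have hSvar : ∀ n, ∫ ω, (S n ω)^2 ∂μ ≤ n * (2*B)^2 := by
    intro n
    induction n with
    | zero => simp [hS]
    | succ n ih =>
      have hD2int : Integrable (fun ω => (D n ω)^2) μ := by
        apply Integrable.mono' (integrable_const ((2*B)^2)) ((hDm n).pow_const 2).aestronglyMeasurable
        apply ae_of_all; intro ω
        have h1 : ‖(D n ω)^2‖ = |D n ω|^2 := by rw [Real.norm_eq_abs, abs_pow]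
        rw [h1]
        have := hDbd n ω; have h0 : (0:ℝ) ≤ |D n ω| := abs_nonneg _
        nlinarith
      have e2 : ∀ ω, (S (n+1) ω)^2 = (S n ω)^2 + (2*(S n ω * D n ω) + (D n ω)^2) := by
        intro ω
        have h : S (n+1) ω = S n ω + D n ω := Finset.sum_range_succ _ _
        rw [h]; ring
      have e : ∫ ω, (S (n+1) ω)^2 ∂μ
          = ∫ ω, ((S n ω)^2 + (2*(S n ω * D n ω) + (D n ω)^2)) ∂μ :=
        integral_congr_ae (ae_of_all _ fun ω => e2 ω)
      have i1 : Integrable (fun ω => 2*(S n ω * D n ω) + (D n ω)^2) μ :=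
        ((hSDint n).const_mul 2).add hD2int
      have e3 : ∫ ω, ((S n ω)^2 + (2*(S n ω * D n ω) + (D n ω)^2)) ∂μ
          = ∫ ω, (S n ω)^2 ∂μ + ∫ ω, (2*(S n ω * D n ω) + (D n ω)^2) ∂μ :=
        integral_add (hS2int n) i1
      have e4 : ∫ ω, (2*(S n ω * D n ω) + (D n ω)^2) ∂μ
          = ∫ ω, 2*(S n ω * D n ω) ∂μ + ∫ ω, (D n ω)^2 ∂μ :=
        integral_add ((hSDint n).const_mul 2) hD2int
      have e5 : ∫ ω, 2*(S n ω * D n ω) ∂μ = 2 * ∫ ω, (S n ω * D n ω) ∂μ :=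
        integral_const_mul 2 _
      rw [e, e3, e4, e5, hSD0 n]
      have hD2 : ∫ ω, (D n ω)^2 ∂μ ≤ (2*B)^2 := by
        calc ∫ ω, (D n ω)^2 ∂μ ≤ ∫ _ω, (2*B)^2 ∂μ := by
              apply integral_mono hD2int (integrable_const _)
              intro ω
              have h2 := hDbd n ω
              show D n ω ^ 2 ≤ (2*B)^2
              nlinarith [sq_abs (D n ω), abs_nonneg (D n ω)]
          _ = (2*B)^2 := by simp
      push_cast
      linarith
  -- subsequence a.e. convergence
  have haeS : ∀ᵐ ω ∂μ, Tendsto (fun k : ℕ => ((k:ℝ)^2)⁻¹ * S (k^2) ω) atTop (nhds 0) := by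
    set T : ℕ → Ω → ℝ := fun k ω => ((k:ℝ)^2)⁻¹ * S (k^2) ω with hT
    have hTm : ∀ k, Measurable (T k) := fun k => (hSm (k^2)).const_mul _
    have hTint : ∀ k, Integrable (fun ω => (T k ω)^2) μ := by
      intro k
      have := (hS2int (k^2)).const_mul ((((k:ℝ)^2)⁻¹)^2)
      apply this.congr
      apply ae_of_all; intro ω
      simp [hT]; ring
    have hbound : ∀ k : ℕ, ∫⁻ ω, ENNReal.ofReal ((T k ω)^2) ∂μ
        ≤ ENNReal.ofReal ((2*B)^2 * ((k:ℝ)^2)⁻¹) := by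
      intro k
      rw [← ofReal_integral_eq_lintegral_ofReal (hTint k) (ae_of_all _ (fun ω => sq_nonneg _))]
      apply ENNReal.ofReal_le_ofReal
      rcases Nat.eq_zero_or_pos k with hk | hk
      · subst hk
        have : ∀ ω, (T 0 ω)^2 = 0 := by intro ω; simp [hT]
        rw [integral_congr_ae (ae_of_all _ this)]
        simp
      · have hkR : (0:ℝ) < (k:ℝ)^2 := by positivity
        have e : ∫ ω, (T k ω)^2 ∂μ = (((k:ℝ)^2)⁻¹)^2 * ∫ ω, (S (k^2) ω)^2 ∂μ := by
          rw [← integral_const_mul]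
          apply integral_congr_ae; apply ae_of_all; intro ω
          simp [hT]; ring
        rw [e]
        have h2 := hSvar (k^2)
        have hcast : ((k^2 : ℕ):ℝ) = (k:ℝ)^2 := by push_cast; ring
        rw [hcast] at h2
        have h3 : (((k:ℝ)^2)⁻¹)^2 * ((k:ℝ)^2 * (2*B)^2) = (2*B)^2 * ((k:ℝ)^2)⁻¹ := by
          field_simp
        calc (((k:ℝ)^2)⁻¹)^2 * ∫ ω, (S (k^2) ω)^2 ∂μ
            ≤ (((k:ℝ)^2)⁻¹)^2 * ((k:ℝ)^2 * (2*B)^2) := by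
              apply mul_le_mul_of_nonneg_left h2 (by positivity)
          _ = (2*B)^2 * ((k:ℝ)^2)⁻¹ := h3
    have hsummable : Summable (fun k : ℕ => (2*B)^2 * ((k:ℝ)^2)⁻¹) := by
      apply Summable.mul_left
      have := Real.summable_one_div_nat_pow.mpr (le_refl 2)
      apply this.congr
      intro k
      rw [one_div]
    have htsum : ∑' k : ℕ, ∫⁻ ω, ENNReal.ofReal ((T k ω)^2) ∂μ ≠ ⊤ := by
      apply ne_top_of_le_ne_top _ (ENNReal.tsum_le_tsum hbound)
      rw [← ENNReal.ofReal_tsum_of_nonneg (fun k => by positivity) hsummable]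
      exact ENNReal.ofReal_ne_top
    have hlint : ∫⁻ ω, ∑' k : ℕ, ENNReal.ofReal ((T k ω)^2) ∂μ ≠ ⊤ := by
      rw [lintegral_tsum (fun k => ((hTm k).pow_const 2).ennreal_ofReal.aemeasurable)]
      exact htsum
    have hae : ∀ᵐ ω ∂μ, ∑' k : ℕ, ENNReal.ofReal ((T k ω)^2) < ⊤ :=
      ae_lt_top (Measurable.ennreal_tsum (fun k => ((hTm k).pow_const 2).ennreal_ofReal)) hlint
    filter_upwards [hae] with ω hω
    have hsum : Summable (fun k => (T k ω)^2) := by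
      have := ENNReal.summable_toReal hω.ne
      apply this.congr
      intro k
      rw [ENNReal.toReal_ofReal (sq_nonneg _)]
    have h0 : Tendsto (fun k => (T k ω)^2) atTop (nhds 0) := hsum.tendsto_atTop_zero
    have habs : Tendsto (fun k => |T k ω|) atTop (nhds 0) := by
      have : (fun k => |T k ω|) = fun k => Real.sqrt ((T k ω)^2) := by
        funext k; rw [Real.sqrt_sq_eq_abs]
      rw [this]
      have := (Real.continuous_sqrt.tendsto 0).comp h0
      simpa [Function.comp_def] using this
    exact tendsto_zero_iff_abs_tendsto_zero _ |>.mpr habs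
  -- conclusion
  filter_upwards [haeS] with ω hω L hL
  have hDa : Tendsto (fun n : ℕ => (n:ℝ)⁻¹ * S n ω) atTop (nhds 0) := by
    apply gapfill (fun n => S n ω) (2*B) (by positivity) _ hω
    intro n
    have h : S (n+1) ω = S n ω + D n ω := Finset.sum_range_succ _ _
    show |S (n+1) ω - S n ω| ≤ 2*B
    rw [h]
    simpa using hDbd n ω
  have hYc : Tendsto (fun n : ℕ => (n:ℝ)⁻¹ * ∑ k ∈ Finset.range n, Y k ω) atTop (nhds L) :=
    hL.cesaro
  have hsum := hDa.add hYc
  rw [zero_add] at hsum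
  apply hsum.congr
  intro n
  have e : ∑ k ∈ Finset.range n, X k ω
      = S n ω + ∑ k ∈ Finset.range n, Y k ω := by
    rw [hS]
    simp only [hD]
    rw [← Finset.sum_add_distrib]
    apply Finset.sum_congr rfl
    intro k _; ring
  rw [e]; ring


lemma isPath_concat {V : Type*} {G : SimpleGraph V} {x v u : V} {p : G.Walk x v}
    (hp : p.IsPath) (hu : u ∉ p.support) (h : G.Adj v u) : (p.concat h).IsPath := by
  rw [← SimpleGraph.Walk.isPath_reverse_iff, SimpleGraph.Walk.reverse_concat]
  apply SimpleGraph.Walk.IsPath.cons hp.reverse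
  rwa [SimpleGraph.Walk.support_reverse, List.mem_reverse]

lemma tree_step {V : Type*} {G : SimpleGraph V} (ht : G.IsTree) {u v w x : V}
    (huv : G.Adj u v) (hwu : G.Adj w u) (hwv : w ≠ v)
    (hx : G.dist x w < G.dist x u) : G.dist x u < G.dist x v := by
  classical
  have hconn : G.Connected := ht.isConnected
  set a := G.dist x w with ha
  have hdw : G.dist w u = 1 := (SimpleGraph.dist_eq_one_iff_adj).mpr hwu
  have hle : G.dist x u ≤ a + 1 := by
    have := hconn.dist_triangle (u := x) (v := w) (w := u)
    omega
  have hxu : G.dist x u = a + 1 := le_antisymm hle hx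
  obtain ⟨p, hp, hplen⟩ := hconn.exists_path_of_dist x w
  have hup : u ∉ p.support := by
    intro hu
    have h1 := SimpleGraph.dist_le (p.takeUntil u hu)
    have h2 := SimpleGraph.Walk.length_takeUntil_le p hu
    omega
  have hq : (p.concat hwu).IsPath := isPath_concat hp hup hwu
  by_contra hcon
  push_neg at hcon
  obtain ⟨r, hr, hrlen⟩ := hconn.exists_path_of_dist x v
  by_cases hur : u ∈ r.support
  · have h1 := SimpleGraph.dist_le (r.takeUntil u hur)
    have h2 := SimpleGraph.dist_le (r.dropUntil u hur)
    have h3 : (r.takeUntil u hur).length + (r.dropUntil u hur).length = r.length := by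
      rw [← SimpleGraph.Walk.length_append, SimpleGraph.Walk.take_spec]
    have hdv : G.dist u v = 1 := (SimpleGraph.dist_eq_one_iff_adj).mpr huv
    omega
  · have hr' : (r.concat huv.symm).IsPath := isPath_concat hr hur huv.symm
    have hEq : (⟨p.concat hwu, hq⟩ : G.Path x u) = ⟨r.concat huv.symm, hr'⟩ :=
      ht.IsAcyclic.path_unique _ _
    have hwalks : p.concat hwu = r.concat huv.symm := congrArg Subtype.val hEq
    obtain ⟨hv, -⟩ := SimpleGraph.Walk.concat_inj hwalks
    exact hwv hv

/-- the number of vertices strictly closer to `u` than to `v` -/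
noncomputable def sideCard {V : Type*} [Fintype V] (G : SimpleGraph V) (u v : V) : ℕ :=
  (Finset.univ.filter (fun x => G.dist x u < G.dist x v)).card

lemma sideCard_lt {V : Type*} [Fintype V] {G : SimpleGraph V} (ht : G.IsTree) {u v w : V}
    (huv : G.Adj u v) (hwu : G.Adj w u) (hwv : w ≠ v) :
    sideCard G w u < sideCard G u v := by
  classical
  apply Finset.card_lt_card
  constructor
  · intro x hx
    simp only [Finset.mem_filter, Finset.mem_univ, true_and] at hx ⊢
    exact tree_step ht huv hwu hwv hx
  · intro hsub
    have hu : u ∈ Finset.univ.filter (fun x => G.dist x u < G.dist x v) := by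
      simp only [Finset.mem_filter, Finset.mem_univ, true_and]
      have h1 : G.dist u u = 0 := by simp
      have h2 : G.dist u v = 1 := (SimpleGraph.dist_eq_one_iff_adj).mpr huv
      omega
    have hmem := hsub hu
    simp only [Finset.mem_filter, Finset.mem_univ, true_and] at hmem
    have h1 : G.dist u w = 1 := (SimpleGraph.dist_eq_one_iff_adj).mpr hwu.symm
    have h2 : G.dist u u = 0 := by simp
    omega


namespace GM
variable {V : Type*} [Fintype V] [DecidableEq V] (P : GM V)

section positivity
variable (hd : 0 < P.d) (hψn : ∀ u j, 0 < P.ψn u j) (hψe : ∀ u v i j, 0 < P.ψe u v i j)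
include hd hψn hψe

lemma bmass_pos (e : P.DirEdge) (j : Fin P.d) : 0 < P.bmass e j := by
  have : Nonempty (Fin P.d) := ⟨⟨0, hd⟩⟩
  apply mul_pos (hψn _ _)
  exact Finset.sum_pos (fun i _ => hψe _ _ _ _) Finset.univ_nonempty

lemma Gam_pos (e : P.DirEdge) (i j : Fin P.d) : 0 < P.Gam e i j :=
  div_pos (mul_pos (hψe _ _ _ _) (hψn _ _)) (P.bmass_pos hd hψn hψe e j)

lemma Gam_le_one (e : P.DirEdge) (i j : Fin P.d) : P.Gam e i j ≤ 1 := by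
  rw [GM.Gam, div_le_one (P.bmass_pos hd hψn hψe e j), GM.bmass, mul_comm]
  apply mul_le_mul_of_nonneg_left _ (le_of_lt (hψn _ _))
  exact Finset.single_le_sum (f := fun k => P.ψe (e.1).1 (e.1).2 k j)
    (fun k _ => le_of_lt (hψe _ _ _ _)) (Finset.mem_univ i)

lemma beta0_pos (e : P.DirEdge) (i : Fin P.d) : 0 < P.beta0 e i := by
  have hne : Nonempty (Fin P.d) := ⟨⟨0, hd⟩⟩
  obtain ⟨j0, hj0⟩ := Finite.exists_min (fun j => P.Gam e i j)
  calc (0:ℝ) < P.Gam e i j0 := P.Gam_pos hd hψn hψe e i j0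
    _ ≤ P.beta0 e i := le_ciInf hj0

lemma Gam_col_sum (e : P.DirEdge) (j : Fin P.d) : ∑ i, P.Gam e i j = 1 := by
  have hb := P.bmass_pos hd hψn hψe e j
  simp only [GM.Gam]
  rw [← Finset.sum_div, div_eq_one_iff_eq (ne_of_gt hb), ← Finset.sum_mul, GM.bmass, mul_comm]

omit hd hψn hψe in
lemma Mprod_pos (m : P.Msg) (hm : ∀ p, 0 < m p) (e : P.DirEdge) (j : Fin P.d) :
    0 < P.Mprod m e j :=
  Finset.prod_pos (fun _w _ => hm _)

lemma sbp_denom_pos (m : P.Msg) (hm : ∀ p, 0 < m p) (e : P.DirEdge) :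
    0 < ∑ k, P.bmass e k * P.Mprod m e k := by
  have : Nonempty (Fin P.d) := ⟨⟨0, hd⟩⟩
  exact Finset.sum_pos (fun k _ => mul_pos (P.bmass_pos hd hψn hψe e k)
    (P.Mprod_pos m hm e k)) Finset.univ_nonempty

lemma sbpProb_nonneg (m : P.Msg) (hm : ∀ p, 0 < m p) (e : P.DirEdge) (j : Fin P.d) :
    0 ≤ P.sbpProb m e j := by
  apply div_nonneg _ (le_of_lt (P.sbp_denom_pos hd hψn hψe m hm e))
  exact le_of_lt (mul_pos (P.bmass_pos hd hψn hψe e j) (P.Mprod_pos m hm e j))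

lemma sbpProb_sum (m : P.Msg) (hm : ∀ p, 0 < m p) (e : P.DirEdge) :
    ∑ j, P.sbpProb m e j = 1 := by
  simp only [GM.sbpProb]
  rw [← Finset.sum_div, div_eq_one_iff_eq (ne_of_gt (P.sbp_denom_pos hd hψn hψe m hm e))]

/-- bp in terms of Γ and sbpProb -/
lemma bp_eq_Gam_sum (m : P.Msg) (hMp : ∀ e j, 0 < P.Mprod m e j) (e : P.DirEdge) (i : Fin P.d) :
    P.bp m (e, i) = ∑ j, P.Gam e i j * P.sbpProb m e j := by
  have hb : ∀ j, P.bmass e j ≠ 0 := fun j => ne_of_gt (P.bmass_pos hd hψn hψe e j)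
  have hD : 0 < ∑ k, P.bmass e k * P.Mprod m e k := by
    have : Nonempty (Fin P.d) := ⟨⟨0, hd⟩⟩
    exact Finset.sum_pos (fun k _ => mul_pos (P.bmass_pos hd hψn hψe e k) (hMp e k))
      Finset.univ_nonempty
  have hkey : ∀ i' j, P.ψe e.1.1 e.1.2 i' j * P.ψn e.1.1 j = P.Gam e i' j * P.bmass e j := by
    intro i' j
    rw [GM.Gam, div_mul_cancel₀ _ (hb j)]
  have hden : (∑ i', ∑ j, P.ψe e.1.1 e.1.2 i' j * P.ψn e.1.1 j * P.Mprod m e j)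
      = ∑ k, P.bmass e k * P.Mprod m e k := by
    rw [Finset.sum_comm]
    apply Finset.sum_congr rfl
    intro j _
    rw [← Finset.sum_mul, ← Finset.sum_mul, GM.bmass, mul_comm (P.ψn e.1.1 j)]
  show (∑ j, P.ψe e.1.1 e.1.2 i j * P.ψn e.1.1 j * P.Mprod m e j) / _ = _
  rw [hden]
  rw [Finset.sum_div]
  apply Finset.sum_congr rfl
  intro j _
  rw [hkey i j, GM.sbpProb]
  field_simp
end positivity

section algebra

/-- product-form expectation algebra -/
lemma sum_pi_prod {ι : Type*} [Fintype ι] [DecidableEq ι] {d : ℕ} (p : ι → Fin d → ℝ)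
    (hsum : ∀ i, ∑ j, p i j = 1) (e : ι) (g : Fin d → ℝ) :
    ∑ jj : ι → Fin d, g (jj e) * ∏ i, p i (jj i) = ∑ j, g j * p e j := by
  classical
  set f : ι → Fin d → ℝ := fun i j => if i = e then g j * p i j else p i j with hf
  have h1 : ∀ jj : ι → Fin d, g (jj e) * ∏ i, p i (jj i) = ∏ i, f i (jj i) := by
    intro jj
    rw [← Finset.mul_prod_erase Finset.univ (fun i => f i (jj i)) (Finset.mem_univ e),
      ← Finset.mul_prod_erase Finset.univ (fun i => p i (jj i)) (Finset.mem_univ e)]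
    have e1 : f e (jj e) = g (jj e) * p e (jj e) := by simp [hf]
    have e2 : ∀ i ∈ Finset.univ.erase e, f i (jj i) = p i (jj i) := by
      intro i hi
      simp [hf, Finset.ne_of_mem_erase hi]
    rw [e1, Finset.prod_congr rfl e2, ← mul_assoc]
  rw [Finset.sum_congr rfl (fun jj _ => h1 jj)]
  have h2 : ∑ jj : ι → Fin d, ∏ i, f i (jj i) = ∏ i, ∑ j, f i j := by
    rw [Finset.prod_univ_sum, Fintype.piFinset_univ]
  rw [h2]
  have h3 : ∀ i, ∑ j, f i j = if i = e then ∑ j, g j * p e j else 1 := by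
    intro i
    by_cases hie : i = e
    · subst hie; simp [hf]
    · simp [hf, hie, hsum i]
  rw [Finset.prod_congr rfl (fun i _ => h3 i)]
  rw [Finset.prod_ite_eq' Finset.univ e (fun _ => ∑ j, g j * p e j)]
  simp

end algebra

end GM

namespace GM
section sbp
open MeasureTheory Filter

variable {V : Type*} [Fintype V] [DecidableEq V] (P : GM V)
variable {Ω : Type*} {mΩ : MeasurableSpace Ω} (μ : Measure Ω) [IsProbabilityMeasure μ]
variable (ℱ : Filtration ℕ mΩ) (m0 : P.Msg)
variable (M : ℕ → Ω → P.Msg) (J : ℕ → Ω → P.DirEdge → Fin P.d)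
variable (hsbp : P.IsSBP μ ℱ (fun t => 1 / ((t : ℝ) + 1)) m0 M J)
include hsbp

/-- closed form: for t ≥ 1 the messages are empirical averages of Γ columns -/
lemma M_closed_form : ∀ t : ℕ, 1 ≤ t → ∀ ω (e : P.DirEdge) (i : Fin P.d),
    M t ω (e, i) = (t:ℝ)⁻¹ * ∑ s ∈ Finset.range t, P.Gam e i (J (s+1) ω e) := by
  obtain ⟨h0, -, -, hrec, -⟩ := hsbp
  intro t
  induction t with
  | zero => omega
  | succ t ih =>
    intro _ ω e i
    rcases Nat.eq_zero_or_pos t with ht | ht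
    · subst ht
      have := hrec 0 ω e i
      simp only [Nat.cast_zero] at this
      rw [this]
      simp
    · have hrec' := hrec t ω e i
      rw [ih ht ω e i] at hrec'
      rw [hrec', Finset.sum_range_succ]
      have htR : (t:ℝ) ≠ 0 := by positivity
      have ht1R : ((t:ℝ) + 1) ≠ 0 := by positivity
      push_cast
      field_simp
      ring

lemma M_pos (hd : 0 < P.d) (hψn : ∀ u j, 0 < P.ψn u j) (hψe : ∀ u v i j, 0 < P.ψe u v i j) :
    ∀ t : ℕ, 1 ≤ t → ∀ ω (p : P.DirEdge × Fin P.d), 0 < M t ω p := by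
  intro t ht ω p
  obtain ⟨e, i⟩ := p
  rw [P.M_closed_form μ ℱ m0 M J hsbp t ht ω e i]
  have h1 : (0:ℝ) < (t:ℝ)⁻¹ := by
    have : (0:ℝ) < (t:ℝ) := by exact_mod_cast ht
    positivity
  apply mul_pos h1
  apply Finset.sum_pos (fun s _ => P.Gam_pos hd hψn hψe e i _)
  exact Finset.nonempty_range_iff.mpr (by omega)

/-- conditional expectation of a function of J (t+1) at one edge, for t ≥ 1 -/
lemma condexp_J (hd : 0 < P.d) (hψn : ∀ u j, 0 < P.ψn u j) (hψe : ∀ u v i j, 0 < P.ψe u v i j)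
    (t : ℕ) (ht : 1 ≤ t) (e : P.DirEdge) (g : Fin P.d → ℝ) :
    μ[(fun ω => g (J (t+1) ω e)) | ℱ t]
      =ᵐ[μ] fun ω => ∑ j, g j * P.sbpProb (M t ω) e j := by
  classical
  have hJmeas := hsbp.2.2.1
  have hCE := hsbp.2.2.2.2
  have hJm : Measurable (J (t+1)) := (hJmeas t).mono (ℱ.le _) le_rfl
  set ind : (P.DirEdge → Fin P.d) → Ω → ℝ :=
    fun jj ω => if ∀ e', J (t+1) ω e' = jj e' then (1:ℝ) else 0 with hind
  have hindmeas : ∀ jj, Measurable (ind jj) := by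
    intro jj
    have : ind jj = (fun v : P.DirEdge → Fin P.d =>
        if ∀ e', v e' = jj e' then (1:ℝ) else 0) ∘ (J (t+1)) := rfl
    rw [this]
    exact (Measurable.of_discrete).comp hJm
  have hindint : ∀ jj, Integrable (ind jj) μ := by
    intro jj
    apply Integrable.mono' (integrable_const 1) (hindmeas jj).aestronglyMeasurable
    apply ae_of_all; intro ω
    simp only [hind]
    split <;> simp
  have hpoint : (fun ω => g (J (t+1) ω e))
      = ∑ jj : P.DirEdge → Fin P.d, fun ω => g (jj e) * ind jj ω := by
    funext ω
    rw [Finset.sum_apply]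
    rw [Finset.sum_eq_single (J (t+1) ω)]
    · simp [hind]
    · intro jj _ hne
      have hnall : ¬ ∀ e', J (t+1) ω e' = jj e' := by
        intro hall
        exact hne (funext hall).symm
      show g (jj e) * ind jj ω = 0
      simp only [hind]
      rw [if_neg hnall, mul_zero]
    · intro h; exact absurd (Finset.mem_univ _) h
  rw [hpoint]
  have step1 : μ[∑ jj : P.DirEdge → Fin P.d, fun ω => g (jj e) * ind jj ω | ℱ t]
      =ᵐ[μ] ∑ jj : P.DirEdge → Fin P.d, μ[fun ω => g (jj e) * ind jj ω | ℱ t] :=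
    condExp_finsetSum (fun jj _ => (hindint jj).const_mul _) _
  have step2 : ∀ jj : P.DirEdge → Fin P.d,
      μ[fun ω => g (jj e) * ind jj ω | ℱ t]
        =ᵐ[μ] fun ω => g (jj e) * ∏ e' : P.DirEdge, P.sbpProb (M t ω) e' (jj e') := by
    intro jj
    have hsmul : (fun ω => g (jj e) * ind jj ω) = g (jj e) • ind jj := by
      funext ω; simp [smul_eq_mul]
    rw [hsmul]
    refine (condExp_smul (g (jj e)) (ind jj) _).trans ?_
    have := hCE t jj
    filter_upwards [this] with ω hω
    simp only [Pi.smul_apply, smul_eq_mul]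
    rw [hω]
  refine step1.trans ?_
  have step3 : ∀ᵐ ω ∂μ, ∀ jj : P.DirEdge → Fin P.d,
      (μ[fun ω => g (jj e) * ind jj ω | ℱ t]) ω
        = g (jj e) * ∏ e' : P.DirEdge, P.sbpProb (M t ω) e' (jj e') := by
    rw [ae_all_iff]
    exact fun jj => step2 jj
  filter_upwards [step3] with ω hω
  rw [Finset.sum_apply]
  rw [Finset.sum_congr rfl (fun jj _ => hω jj)]
  -- algebra
  have hsum1 : ∀ e' : P.DirEdge, ∑ j, P.sbpProb (M t ω) e' j = 1 := by
    intro e'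
    exact P.sbpProb_sum hd hψn hψe (M t ω)
      (fun p => P.M_pos μ ℱ m0 M J hsbp hd hψn hψe t ht ω p) e'
  exact GM.sum_pi_prod (fun e' => P.sbpProb (M t ω) e') hsum1 e g

end sbp
end GM
namespace GM
section master
open MeasureTheory Filter

variable {V : Type*} [Fintype V] [DecidableEq V] (P : GM V)

lemma sbpProb_measurable_msg (e : P.DirEdge) (j : Fin P.d) :
    Measurable (fun m : P.Msg => P.sbpProb m e j) := by
  have hMp : ∀ (k : Fin P.d), Measurable (fun m : P.Msg => P.Mprod m e k) := by
    intro k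
    apply Finset.measurable_prod
    intro w _
    exact measurable_pi_apply _
  exact ((hMp j).const_mul _).div (Finset.measurable_sum _ (fun k _ => (hMp k).const_mul _))

lemma edge_converges
    (hd : 0 < P.d) (htree : P.G.IsTree)
    (hψn : ∀ u j, 0 < P.ψn u j) (hψe : ∀ u v i j, 0 < P.ψe u v i j)
    {Ω : Type*} {mΩ : MeasurableSpace Ω} (μ : Measure Ω) [IsProbabilityMeasure μ]
    (ℱ : Filtration ℕ mΩ) (m0 : P.Msg)
    (M : ℕ → Ω → P.Msg) (J : ℕ → Ω → P.DirEdge → Fin P.d)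
    (hsbp : P.IsSBP μ ℱ (fun t => 1 / ((t : ℝ) + 1)) m0 M J)
    (mstar : P.Msg) (hstar : mstar ∈ P.ball) (hfix : P.bp mstar = mstar) :
    ∀ e : P.DirEdge, ∀ᵐ ω ∂μ, ∀ i : Fin P.d,
      Tendsto (fun t => M t ω (e, i)) atTop (nhds (mstar (e, i))) := by
  classical
  have hmstar_pos : ∀ p : P.DirEdge × Fin P.d, 0 < mstar p := by
    intro ⟨e, i⟩
    exact lt_of_lt_of_le (P.beta0_pos hd hψn hψe e i) ((hstar e).2 i).1
  have hMprod_star_pos : ∀ (e : P.DirEdge) j, 0 < P.Mprod mstar e j :=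
    fun e j => P.Mprod_pos mstar hmstar_pos e j
  have hden_star : ∀ e : P.DirEdge, 0 < ∑ k, P.bmass e k * P.Mprod mstar e k := by
    intro e
    have : Nonempty (Fin P.d) := ⟨⟨0, hd⟩⟩
    exact Finset.sum_pos (fun k _ => mul_pos (P.bmass_pos hd hψn hψe e k)
      (hMprod_star_pos e k)) Finset.univ_nonempty
  have hfix' : ∀ (e : P.DirEdge) i, mstar (e, i) = ∑ j, P.Gam e i j * P.sbpProb mstar e j := by
    intro e i
    rw [← P.bp_eq_Gam_sum hd hψn hψe mstar hMprod_star_pos e i]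
    exact (congrFun hfix (e, i)).symm
  set 𝒢 : Filtration ℕ mΩ :=
    ⟨fun n => ℱ (n+1), fun a b hab => ℱ.mono (by omega), fun n => ℱ.le (n+1)⟩ with h𝒢
  suffices H : ∀ n : ℕ, ∀ e : P.DirEdge, sideCard P.G e.1.1 e.1.2 < n →
      (∀ᵐ ω ∂μ, ∀ i : Fin P.d,
        Tendsto (fun t => M t ω (e, i)) atTop (nhds (mstar (e, i)))) by
    exact fun e => H (sideCard P.G e.1.1 e.1.2 + 1) e (Nat.lt_succ_self _)
  intro n
  induction n with
  | zero => exact fun e h => absurd h (Nat.not_lt_zero _)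
  | succ n IH =>
    intro e hcard
    have hnoise : ∀ i : Fin P.d, ∀ᵐ ω ∂μ, ∀ L : ℝ,
        Tendsto (fun k => ∑ j, P.Gam e i j * P.sbpProb (M (k+1) ω) e j) atTop (nhds L) →
        Tendsto (fun k : ℕ => (k:ℝ)⁻¹ * ∑ s ∈ Finset.range k, P.Gam e i (J (s+2) ω e))
          atTop (nhds L) := by
      intro i
      apply avg_tendsto_of_condexp 𝒢
        (X := fun k ω => P.Gam e i (J (k+2) ω e))
        (Y := fun k ω => ∑ j, P.Gam e i j * P.sbpProb (M (k+1) ω) e j)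
        (B := 1) zero_le_one
      · intro k
        exact (Measurable.of_discrete
          (f := fun v : P.DirEdge → Fin P.d => P.Gam e i (v e))).comp (hsbp.2.2.1 (k+1))
      · intro k ω
        have h1 := P.Gam_pos hd hψn hψe e i (J (k+2) ω e)
        have h2 := P.Gam_le_one hd hψn hψe e i (J (k+2) ω e)
        rw [abs_le]; constructor <;> linarith
      · intro k
        have hMmeas : Measurable[ℱ (k+1)] (M (k+1)) := hsbp.2.1 (k+1)
        have hg : Measurable (fun m : P.Msg => ∑ j, P.Gam e i j * P.sbpProb m e j) :=
          Finset.measurable_sum _ (fun j _ => (P.sbpProb_measurable_msg e j).const_mul _)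
        exact hg.comp hMmeas
      · intro k ω
        have hpos : ∀ p, 0 < M (k+1) ω p :=
          P.M_pos μ ℱ m0 M J hsbp hd hψn hψe (k+1) (by omega) ω
        have h0 : ∀ j, 0 ≤ P.sbpProb (M (k+1) ω) e j :=
          fun j => P.sbpProb_nonneg hd hψn hψe _ hpos e j
        have h1 : ∑ j, P.sbpProb (M (k+1) ω) e j = 1 :=
          P.sbpProb_sum hd hψn hψe _ hpos e
        rw [abs_le]; constructor
        · have : 0 ≤ ∑ j, P.Gam e i j * P.sbpProb (M (k+1) ω) e j :=
            Finset.sum_nonneg (fun j _ =>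
              mul_nonneg (le_of_lt (P.Gam_pos hd hψn hψe e i j)) (h0 j))
          linarith
        · calc ∑ j, P.Gam e i j * P.sbpProb (M (k+1) ω) e j
              ≤ ∑ j, 1 * P.sbpProb (M (k+1) ω) e j :=
                Finset.sum_le_sum (fun j _ =>
                  mul_le_mul_of_nonneg_right (P.Gam_le_one hd hψn hψe e i j) (h0 j))
            _ = 1 := by simp only [one_mul]; exact h1
      · intro k
        exact P.condexp_J μ ℱ m0 M J hsbp hd hψn hψe (k+1) (by omega) e (P.Gam e i)
    have hIH : ∀ w : {x // x ∈ (P.G.neighborFinset e.1.1).erase e.1.2}, ∀ᵐ ω ∂μ, ∀ i,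
        Tendsto (fun t => M t ω (P.revEdge e w, i)) atTop
          (nhds (mstar (P.revEdge e w, i))) := by
      intro w
      apply IH
      have hadj : P.G.Adj w.1 e.1.1 := by
        have h := Finset.mem_of_mem_erase w.2
        rw [SimpleGraph.mem_neighborFinset] at h
        exact h.symm
      have hne : w.1 ≠ e.1.2 := Finset.ne_of_mem_erase w.2
      have hlt : sideCard P.G w.1 e.1.1 < sideCard P.G e.1.1 e.1.2 :=
        sideCard_lt htree e.2 hadj hne
      show sideCard P.G w.1 e.1.1 < n
      omega
    filter_upwards [ae_all_iff.mpr hnoise, ae_all_iff.mpr hIH] with ω hn hi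
    intro i
    have hMprod_lim : ∀ j, Tendsto (fun t => P.Mprod (M t ω) e j) atTop
        (nhds (P.Mprod mstar e j)) := by
      intro j
      show Tendsto (fun t => ∏ w ∈ ((P.G.neighborFinset e.1.1).erase e.1.2).attach,
        M t ω (P.revEdge e w, j)) atTop (nhds (∏ w ∈ ((P.G.neighborFinset e.1.1).erase e.1.2).attach, mstar (P.revEdge e w, j)))
      exact tendsto_finset_prod _ (fun w _ => hi w j)
    have hsbp_lim : ∀ j, Tendsto (fun t => P.sbpProb (M t ω) e j) atTop
        (nhds (P.sbpProb mstar e j)) := by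
      intro j
      have hnum : Tendsto (fun t => P.bmass e j * P.Mprod (M t ω) e j) atTop
          (nhds (P.bmass e j * P.Mprod mstar e j)) := tendsto_const_nhds.mul (hMprod_lim j)
      have hden : Tendsto (fun t => ∑ k, P.bmass e k * P.Mprod (M t ω) e k) atTop
          (nhds (∑ k, P.bmass e k * P.Mprod mstar e k)) :=
        tendsto_finset_sum _ (fun k _ => tendsto_const_nhds.mul (hMprod_lim k))
      exact hnum.div hden (ne_of_gt (hden_star e))
    have hY : Tendsto (fun k => ∑ j, P.Gam e i j * P.sbpProb (M (k+1) ω) e j) atTop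
        (nhds (mstar (e, i))) := by
      rw [hfix' e i]
      have h1 : Tendsto (fun t => ∑ j, P.Gam e i j * P.sbpProb (M t ω) e j) atTop
          (nhds (∑ j, P.Gam e i j * P.sbpProb mstar e j)) :=
        tendsto_finset_sum _ (fun j _ => tendsto_const_nhds.mul (hsbp_lim j))
      exact h1.comp (tendsto_add_atTop_nat 1)
    have hA : Tendsto (fun k : ℕ => (k:ℝ)⁻¹ * ∑ s ∈ Finset.range k, P.Gam e i (J (s+2) ω e))
        atTop (nhds (mstar (e, i))) := hn i _ hY
    set c0 : ℝ := P.Gam e i (J 1 ω e) with hc0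
    set A : ℕ → ℝ := fun k => (k:ℝ)⁻¹ * ∑ s ∈ Finset.range k, P.Gam e i (J (s+2) ω e) with hA'
    have hMt : ∀ t : ℕ, M (t+1) ω (e, i) = ((t:ℝ)+1)⁻¹ * c0 + (1 - ((t:ℝ)+1)⁻¹) * A t := by
      intro t
      have hc := P.M_closed_form μ ℱ m0 M J hsbp (t+1) (by omega) ω e i
      rw [hc, Finset.sum_range_succ']
      rcases Nat.eq_zero_or_pos t with h0 | hpos
      · subst h0; simp [hA', hc0]
      · have htR : ((t:ℝ)) ≠ 0 := by
          have : (0:ℝ) < (t:ℝ) := by exact_mod_cast hpos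
          linarith
        have e1 : ∑ s ∈ Finset.range t, P.Gam e i (J (s+1+1) ω e) = (t:ℝ) * A t := by
          rw [hA', ← mul_assoc, mul_inv_cancel₀ htR, one_mul]
        rw [e1]
        have ht1R : ((t:ℝ)+1) ≠ 0 := by positivity
        push_cast
        field_simp
        ring
    have hinv : Tendsto (fun t : ℕ => ((t:ℝ)+1)⁻¹) atTop (nhds 0) := by
      have := tendsto_one_div_add_atTop_nhds_zero_nat (𝕜 := ℝ)
      simpa [one_div] using this
    have hlim : Tendsto (fun t : ℕ => ((t:ℝ)+1)⁻¹ * c0 + (1 - ((t:ℝ)+1)⁻¹) * A t) atTop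
        (nhds (mstar (e, i))) := by
      have hcc : Tendsto (fun _ : ℕ => c0) atTop (nhds c0) := tendsto_const_nhds
      have hone : Tendsto (fun _ : ℕ => (1:ℝ)) atTop (nhds 1) := tendsto_const_nhds
      have h2 := (hinv.mul hcc).add ((hone.sub hinv).mul hA)
      simpa using h2
    have hfin : Tendsto (fun t => M (t+1) ω (e, i)) atTop (nhds (mstar (e, i))) := by
      rw [show (fun t => M (t+1) ω (e, i))
        = fun t : ℕ => ((t:ℝ)+1)⁻¹ * c0 + (1 - ((t:ℝ)+1)⁻¹) * A t from funext hMt]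
      exact hlim
    exact (tendsto_add_atTop_iff_nat 1).mp hfin

end master
end GM
/-- On any tree-structured pairwise MRF, the SBP message sequence with
step size `α_t = 1/(t+1)` converges almost surely to the unique BP fixed point `m*`. -/
theorem sbp_tree_converges_almost_surely
    {V : Type*} [Fintype V] [DecidableEq V] (P : GM V)
    (hd : 0 < P.d)
    (htree : P.G.IsTree)
    (hψn : ∀ u j, 0 < P.ψn u j)
    (hψe : ∀ u v i j, 0 < P.ψe u v i j)
    (hψsymm : ∀ u v i j, P.ψe u v i j = P.ψe v u j i)
    {Ω : Type*} {mΩ : MeasurableSpace Ω} (μ : Measure Ω) [IsProbabilityMeasure μ]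
    (ℱ : Filtration ℕ mΩ) (m0 : P.Msg)
    (hm0 : ∀ e : P.DirEdge, (∑ i, m0 (e, i)) = 1 ∧ ∀ i, 0 ≤ m0 (e, i))
    (M : ℕ → Ω → P.Msg) (J : ℕ → Ω → P.DirEdge → Fin P.d)
    (hsbp : P.IsSBP μ ℱ (fun t => 1 / ((t : ℝ) + 1)) m0 M J)
    (mstar : P.Msg) (hstar : mstar ∈ P.ball) (hfix : P.bp mstar = mstar) :
    ∀ᵐ ω ∂μ, Tendsto (fun t => M t ω) atTop (nhds mstar) := by
  have h := P.edge_converges hd htree hψn hψe μ ℱ m0 M J hsbp mstar hstar hfix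
  filter_upwards [ae_all_iff.mpr h] with ω hω
  rw [tendsto_pi_nhds]
  intro p
  obtain ⟨e, i⟩ := p
  exact hω e i
end

section
/- For any tree-structured pairwise Markov random field with diameter r = diam(G), the r-fold composition of the BP update function F is constant on B: for all message vectors m, m′ ∈ B, F^{(r)}(m) = F^{(r)}(m′). Moreover, the common value m* := F^{(r)}(m) is a fixed point of F, and it is the unique fixed point of F in B. -/
open Finset MeasureTheory Filter

section TreeHelpers

open SimpleGraph

variable {V : Type*} [DecidableEq V] {G : SimpleGraph V}

private lemma bridge_of_tree (ht : G.IsTree) {a b : V} (hab : G.Adj a b) :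
    ¬ (G.deleteEdges {s(a, b)}).Reachable a b := by
  have h := (SimpleGraph.isAcyclic_iff_forall_adj_isBridge.mp ht.IsAcyclic) hab
  rw [SimpleGraph.isBridge_iff] at h
  exact h

private lemma vert_not_mem_support (ht : G.IsTree) {a b x : V} (hab : G.Adj a b)
    (q : (G.deleteEdges {s(a, b)}).Walk x a) : b ∉ q.support := by
  intro hb
  exact bridge_of_tree ht hab ⟨(q.dropUntil b hb).reverse⟩

private lemma dist_side (ht : G.IsTree) {a b x : V} (hab : G.Adj a b)
    (hx : (G.deleteEdges {s(a, b)}).Reachable x a) :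
    G.dist x b = G.dist x a + 1 := by
  have hconn := ht.isConnected
  have h1 : G.dist x b ≤ G.dist x a + 1 := by
    have h2 := hconn.dist_triangle (u := x) (v := a) (w := b)
    rwa [SimpleGraph.dist_eq_one_iff_adj.mpr hab] at h2
  obtain ⟨p, hp⟩ := (hconn.preconnected x b).exists_walk_length_eq_dist
  have hmem : s(a, b) ∈ p.edges := by
    by_contra hne
    have hxb : (G.deleteEdges {s(a, b)}).Reachable x b :=
      ⟨p.toDeleteEdges _ (by
        intro e he hes
        rw [Set.mem_singleton_iff] at hes
        exact hne (hes ▸ he))⟩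
    exact bridge_of_tree ht hab (hx.symm.trans hxb)
  have ha : a ∈ p.support := SimpleGraph.Walk.fst_mem_support_of_mem_edges p hmem
  have hlen : (p.takeUntil a ha).length + (p.dropUntil a ha).length = p.length := by
    rw [← SimpleGraph.Walk.length_append, p.take_spec ha]
  have h2 : G.dist x a ≤ (p.takeUntil a ha).length := SimpleGraph.dist_le _
  have h3 : 1 ≤ (p.dropUntil a ha).length := by
    rcases Nat.eq_zero_or_pos (p.dropUntil a ha).length with h0 | h0
    · exact absurd (SimpleGraph.Walk.eq_of_length_eq_zero h0) hab.ne
    · exact h0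
  omega

private lemma reach_step (ht : G.IsTree) {a b c x : V} (hab : G.Adj a b) (hbc : G.Adj b c)
    (hac : a ≠ c) (hx : (G.deleteEdges {s(a, b)}).Reachable x a) :
    (G.deleteEdges {s(b, c)}).Reachable x b := by
  obtain ⟨q⟩ := hx
  have hbs : b ∉ q.support := vert_not_mem_support ht hab q
  have hq : ∀ e ∈ q.edges, e ∈ (G.deleteEdges {s(b, c)}).edgeSet := by
    intro e he
    have heG : e ∈ G.edgeSet := SimpleGraph.edgeSet_mono (G.deleteEdges_le _) (q.edges_subset_edgeSet he)
    rw [SimpleGraph.edgeSet_deleteEdges]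
    refine ⟨heG, ?_⟩
    rw [Set.mem_singleton_iff]
    rintro rfl
    exact hbs (SimpleGraph.Walk.fst_mem_support_of_mem_edges q he)
  have hadj : (G.deleteEdges {s(b, c)}).Adj a b := by
    rw [SimpleGraph.deleteEdges_adj]
    refine ⟨hab, ?_⟩
    rw [Set.mem_singleton_iff, Sym2.eq_iff]
    rintro (⟨h1, h2⟩ | ⟨h1, h2⟩)
    · exact hab.ne h1
    · exact hac h1
  exact ⟨(q.transfer _ hq).concat hadj⟩

end TreeHelpers

namespace GM

variable {V : Type*} [Fintype V] [DecidableEq V] (P : GM V)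

open Classical in
/-- Height of a directed edge: one plus the maximal distance from `e.1.1` within the
component of `e.1.1` after deleting the edge. -/
noncomputable def bpHeight (e : P.DirEdge) : ℕ :=
  Finset.univ.sup fun x =>
    if (P.G.deleteEdges {s(e.1.1, e.1.2)}).Reachable x e.1.1 then P.G.dist x e.1.1 + 1 else 0

lemma bpHeight_pos (e : P.DirEdge) : 1 ≤ P.bpHeight e := by
  refine le_trans ?_ (Finset.le_sup (Finset.mem_univ e.1.1))
  rw [if_pos (SimpleGraph.Reachable.refl _), SimpleGraph.dist_self]

lemma bpHeight_le_diam (htree : P.G.IsTree) (e : P.DirEdge) :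
    P.bpHeight e ≤ P.graphDiam := by
  refine Finset.sup_le fun x _ => ?_
  split_ifs with h
  · rw [← dist_side htree e.2 h]
    exact Finset.le_sup (f := fun pr : V × V => P.G.dist pr.1 pr.2)
      (Finset.mem_univ (x, e.1.2))
  · exact Nat.zero_le _

lemma bpHeight_rev_lt (htree : P.G.IsTree) (e : P.DirEdge)
    (w : {x // x ∈ (P.G.neighborFinset e.1.1).erase e.1.2}) :
    P.bpHeight (P.revEdge e w) < P.bpHeight e := by
  have hwu : P.G.Adj w.1 e.1.1 := (P.revEdge e w).2
  have hwv : w.1 ≠ e.1.2 := Finset.ne_of_mem_erase w.2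
  have h1 : 1 ≤ P.bpHeight e := P.bpHeight_pos e
  rw [bpHeight]
  refine Finset.sup_lt_iff (by simp only [bot_eq_zero]; omega) |>.mpr fun x _ => ?_
  split_ifs with h
  · have h' : (P.G.deleteEdges {s(w.1, e.1.1)}).Reachable x w.1 := h
    have hreach : (P.G.deleteEdges {s(e.1.1, e.1.2)}).Reachable x e.1.1 :=
      reach_step htree hwu e.2 hwv h'
    have hdist : P.G.dist x e.1.1 = P.G.dist x w.1 + 1 := dist_side htree hwu h'
    have hle : P.G.dist x e.1.1 + 1 ≤ P.bpHeight e := by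
      refine le_trans ?_ (Finset.le_sup (Finset.mem_univ x))
      rw [if_pos hreach]
    have hrw : P.G.dist x ((P.revEdge e w : P.DirEdge) : V × V).1 = P.G.dist x w.1 := rfl
    omega
  · omega

lemma bp_congr (m₁ m₂ : P.Msg) (p : P.DirEdge × Fin P.d)
    (h : ∀ j, P.Mprod m₁ p.1 j = P.Mprod m₂ p.1 j) : P.bp m₁ p = P.bp m₂ p := by
  unfold bp
  simp only [h]

lemma bp_iterate_eq (htree : P.G.IsTree) :
    ∀ ℓ (e : P.DirEdge), P.bpHeight e ≤ ℓ →
      ∀ m m' (i : Fin P.d), (P.bp^[ℓ] m) (e, i) = (P.bp^[ℓ] m') (e, i) := by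
  intro ℓ
  induction ℓ with
  | zero =>
    intro e he
    have := P.bpHeight_pos e
    omega
  | succ n ih =>
    intro e he m m' i
    rw [Function.iterate_succ_apply', Function.iterate_succ_apply']
    have hM : ∀ j, P.Mprod (P.bp^[n] m) e j = P.Mprod (P.bp^[n] m') e j := by
      intro j
      refine Finset.prod_congr rfl fun w _ => ?_
      have hlt := P.bpHeight_rev_lt htree e w
      exact ih (P.revEdge e w) (by omega) m m' j
    exact P.bp_congr _ _ (e, i) hM

end GM

/-- For a tree with diameter `r`, the `r`-fold composition of the BP update `F`
is constant on `B`; the common value `m* = F^(r)(m)` is a fixed point of `F`, and it is the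
unique fixed point of `F` in `B`. -/
theorem bp_tree_iterate_constant_unique_fixed_point
    {V : Type*} [Fintype V] [DecidableEq V] (P : GM V)
    (hd : 0 < P.d)
    (htree : P.G.IsTree)
    (hψn : ∀ u j, 0 < P.ψn u j)
    (hψe : ∀ u v i j, 0 < P.ψe u v i j)
    (hψsymm : ∀ u v i j, P.ψe u v i j = P.ψe v u j i) :
    (∀ m ∈ P.ball, ∀ m' ∈ P.ball, P.bp^[P.graphDiam] m = P.bp^[P.graphDiam] m') ∧
    (∀ m ∈ P.ball,
      P.bp (P.bp^[P.graphDiam] m) = P.bp^[P.graphDiam] m ∧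
      ∀ m' ∈ P.ball, P.bp m' = m' → m' = P.bp^[P.graphDiam] m) := by
  have key : ∀ m m' : P.Msg, P.bp^[P.graphDiam] m = P.bp^[P.graphDiam] m' := by
    intro m m'
    funext p
    obtain ⟨e, i⟩ := p
    exact P.bp_iterate_eq htree _ e (P.bpHeight_le_diam htree e) m m' i
  refine ⟨fun m _ m' _ => key m m', fun m _ => ⟨?_, fun m' _ hm' => ?_⟩⟩
  · calc P.bp (P.bp^[P.graphDiam] m) = P.bp^[P.graphDiam + 1] m :=
          (Function.iterate_succ_apply' P.bp P.graphDiam m).symm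
      _ = P.bp^[P.graphDiam] (P.bp m) := Function.iterate_succ_apply P.bp P.graphDiam m
      _ = P.bp^[P.graphDiam] m := key _ _
  · rw [← key m' m]
    exact (Function.iterate_fixed hm' _).symm
end
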